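/- arXiv:1812.05013 — 4 statements merged into one kernel-verified Lean document; each statement's English description precedes it below -/
import Mathlib

section
/- Let n, k, t be positive integers, let α ≥ 0, and let F ∈ ℂ^{n×n} be a matrix all of whose entries satisfy |F_{ij}| ≤ α. Then for every k-sparse vector x ∈ ℂ^n and every t-sparse vector e ∈ ℂ^n, ∑_{i=1}^{n} |(Fx)_i|·|e_i| ≤ α·√(k·t)·‖x‖₂·‖e‖₂. -/
/-! Each entry of `F x` is bounded by `α ‖x‖₁`, so the sum is at most `α ‖x‖₁ ‖e‖₁`, and
Cauchy–Schwarz on the support gives `‖v‖₁ ≤ √s ‖v‖₂` for an `s`-sparse vector `v`. -/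

/-- The Euclidean (ℓ2) norm of a complex vector. -/
noncomputable def l2norm {n : ℕ} (x : Fin n → ℂ) : ℝ :=
  Real.sqrt (∑ i, ‖x i‖ ^ 2)

/-- A vector is `k`-sparse if at most `k` of its entries are nonzero. -/
def Sparse {n : ℕ} (k : ℕ) (x : Fin n → ℂ) : Prop :=
  (Finset.univ.filter (fun i => x i ≠ 0)).card ≤ k

open Finset

lemma norm_mulVec_le_mul_sum_norm {m ι R : Type*} [Fintype ι] [SeminormedRing R]
    {α : ℝ} {F : Matrix m ι R} (hF : ∀ i j, ‖F i j‖ ≤ α) (x : ι → R) (i : m) :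
    ‖F.mulVec x i‖ ≤ α * ∑ j, ‖x j‖ :=
  calc ‖F.mulVec x i‖ ≤ ∑ j, ‖F i j * x j‖ := norm_sum_le _ _
    _ ≤ ∑ j, α * ‖x j‖ := sum_le_sum fun j _ =>
        (norm_mul_le _ _).trans (mul_le_mul_of_nonneg_right (hF i j) (norm_nonneg _))
    _ = α * ∑ j, ‖x j‖ := (mul_sum _ _ _).symm

lemma Sparse.sum_norm_le {n k : ℕ} {x : Fin n → ℂ} (hx : Sparse k x) :
    ∑ i, ‖x i‖ ≤ Real.sqrt k * l2norm x := by
  set S := univ.filter fun i => x i ≠ 0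
  have hsum : ∑ i, ‖x i‖ = ∑ i ∈ S, ‖x i‖ := by
    simp only [S, ← norm_ne_zero_iff (a := x _), sum_filter_ne_zero]
  have hsq : (∑ i ∈ S, ‖x i‖) ^ 2 ≤ k * ∑ i, ‖x i‖ ^ 2 :=
    calc (∑ i ∈ S, ‖x i‖) ^ 2 ≤ #S * ∑ i ∈ S, ‖x i‖ ^ 2 := sq_sum_le_card_mul_sum_sq
      _ ≤ k * ∑ i, ‖x i‖ ^ 2 := by
        gcongr
        · exact_mod_cast hx
        · exact subset_univ S
  rw [hsum, l2norm, ← Real.sqrt_mul k.cast_nonneg]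
  exact Real.le_sqrt_of_sq_le hsq

theorem bilinear_uncertainty_bound_general
    (n k t : ℕ) (α : ℝ) (hα : 0 ≤ α)
    (F : Matrix (Fin n) (Fin n) ℂ) (hF : ∀ i j, ‖F i j‖ ≤ α)
    (x : Fin n → ℂ) (hx : Sparse k x)
    (e : Fin n → ℂ) (he : Sparse t e) :
    ∑ i, ‖F.mulVec x i‖ * ‖e i‖ ≤
      α * Real.sqrt (k * t) * l2norm x * l2norm e := by
  have hFx : 0 ≤ α * (Real.sqrt k * l2norm x) := by unfold l2norm; positivity
  calc ∑ i, ‖F.mulVec x i‖ * ‖e i‖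
      ≤ ∑ i, α * (Real.sqrt k * l2norm x) * ‖e i‖ := sum_le_sum fun i _ =>
        mul_le_mul_of_nonneg_right
          ((norm_mulVec_le_mul_sum_norm hF x i).trans
            (mul_le_mul_of_nonneg_left hx.sum_norm_le hα))
          (norm_nonneg _)
    _ = α * (Real.sqrt k * l2norm x) * ∑ i, ‖e i‖ := (mul_sum _ _ _).symm
    _ ≤ α * (Real.sqrt k * l2norm x) * (Real.sqrt t * l2norm e) :=
        mul_le_mul_of_nonneg_left he.sum_norm_le hFx
    _ = α * Real.sqrt (k * t) * l2norm x * l2norm e := by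
        rw [Real.sqrt_mul k.cast_nonneg]
        ring

/-- Bilinear estimate: if every entry of `F` has modulus at most `α`, `x` is `k`-sparse
and `e` is `t`-sparse, then `∑ i |(Fx)_i|·|e_i| ≤ α·√(kt)·‖x‖₂·‖e‖₂`. -/
theorem bilinear_uncertainty_bound
    (n k t : ℕ) (hn : 0 < n) (hk : 0 < k) (ht : 0 < t) (α : ℝ) (hα : 0 ≤ α)
    (F : Matrix (Fin n) (Fin n) ℂ) (hF : ∀ i j, ‖F i j‖ ≤ α)
    (x : Fin n → ℂ) (hx : Sparse k x)
    (e : Fin n → ℂ) (he : Sparse t e) :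
    ∑ i, ‖F.mulVec x i‖ * ‖e i‖ ≤
      α * Real.sqrt (k * t) * l2norm x * l2norm e :=
  bilinear_uncertainty_bound_general n k t α hα F hF x hx e he
end

section
/- Let n, k, t be positive integers, let α ≥ 0 with α·√(k·t) ≤ 0.19, and let F ∈ ℂ^{n×n} be a unitary matrix all of whose entries satisfy |F_{ij}| ≤ α. Then for every k-sparse vector x̂ ∈ ℂ^n and every t-sparse vector e ∈ ℂ^n, 0.9·√(‖x̂‖₂² + ‖e‖₂²) ≤ ‖F^{-1}x̂ + e‖₂ ≤ 1.1·√(‖x̂‖₂² + ‖e‖₂²). -/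
/-!
Writing `u = F⁻¹x̂`, unitarity gives `‖u + e‖² = ‖x̂‖² + ‖e‖² + 2 Re⟨u, e⟩`, so it suffices to bound
the cross term. Every entry of `u` has modulus at most `α‖x̂‖₁ ≤ α√k‖x̂‖₂`, and `‖e‖₁ ≤ √t‖e‖₂`, hence
`|Re⟨u, e⟩| ≤ α√(kt)‖x̂‖‖e‖ ≤ 0.095(‖x̂‖² + ‖e‖²)`, and `‖u + e‖²` lies between `0.81` and `1.21`
times `‖x̂‖² + ‖e‖²`.
-/

open Matrix ComplexConjugate

section Coordinates

variable {ι : Type*} [Fintype ι]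

lemma sum_norm_sq_add (u v : ι → ℂ) :
    ∑ i, ‖(u + v) i‖ ^ 2 =
      ∑ i, ‖u i‖ ^ 2 + ∑ i, ‖v i‖ ^ 2 + 2 * ∑ i, (u i * conj (v i)).re := by
  simp only [Pi.add_apply, Complex.sq_norm, Complex.normSq_add, Finset.sum_add_distrib,
    Finset.mul_sum]

lemma abs_sum_re_mul_conj_le {u v : ι → ℂ} {c : ℝ} (hu : ∀ i, ‖u i‖ ≤ c) :
    |∑ i, (u i * conj (v i)).re| ≤ c * ∑ i, ‖v i‖ :=
  calc |∑ i, (u i * conj (v i)).re|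
      ≤ ∑ i, |(u i * conj (v i)).re| := Finset.abs_sum_le_sum_abs _ _
    _ ≤ ∑ i, ‖u i‖ * ‖v i‖ := Finset.sum_le_sum fun i _ =>
        (Complex.abs_re_le_norm _).trans_eq (by rw [norm_mul, Complex.norm_conj])
    _ ≤ c * ∑ i, ‖v i‖ := by
        rw [Finset.mul_sum]
        exact Finset.sum_le_sum fun i _ => mul_le_mul_of_nonneg_right (hu i) (norm_nonneg _)

lemma star_dotProduct_self (v : ι → ℂ) : star v ⬝ᵥ v = ((∑ i, ‖v i‖ ^ 2 : ℝ) : ℂ) := by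
  simp [dotProduct, Complex.sq_norm, mul_comm, Complex.mul_conj]

lemma sum_norm_sq_conjTranspose_mulVec {κ : Type*} [Fintype κ] [DecidableEq ι]
    {F : Matrix ι κ ℂ} (hF : F * Fᴴ = 1) (x : ι → ℂ) :
    ∑ i, ‖(Fᴴ *ᵥ x) i‖ ^ 2 = ∑ i, ‖x i‖ ^ 2 := by
  have h : star (Fᴴ *ᵥ x) ⬝ᵥ (Fᴴ *ᵥ x) = star x ⬝ᵥ x := by
    rw [star_mulVec, conjTranspose_conjTranspose, dotProduct_mulVec, vecMul_vecMul, hF,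
      vecMul_one]
  rw [star_dotProduct_self, star_dotProduct_self] at h
  exact_mod_cast h

lemma norm_mulVec_apply_le {R κ : Type*} [SeminormedRing R] {A : Matrix κ ι R} {α : ℝ}
    (hA : ∀ i j, ‖A i j‖ ≤ α) (x : ι → R) (i : κ) :
    ‖(A *ᵥ x) i‖ ≤ α * ∑ j, ‖x j‖ :=
  calc ‖(A *ᵥ x) i‖ ≤ ∑ j, ‖A i j * x j‖ := norm_sum_le _ _
    _ ≤ ∑ j, α * ‖x j‖ := Finset.sum_le_sum fun j _ =>
        (norm_mul_le _ _).trans (mul_le_mul_of_nonneg_right (hA i j) (norm_nonneg _))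
    _ = α * ∑ j, ‖x j‖ := (Finset.mul_sum _ _ _).symm

end Coordinates

lemma l2norm_nonneg {n : ℕ} (x : Fin n → ℂ) : 0 ≤ l2norm x :=
  Real.sqrt_nonneg _

lemma l2norm_sq {n : ℕ} (x : Fin n → ℂ) : l2norm x ^ 2 = ∑ i, ‖x i‖ ^ 2 :=
  Real.sq_sqrt (by positivity)

lemma sum_norm_le_sqrt_mul_l2norm {n m : ℕ} {v : Fin n → ℂ} (hv : Sparse m v) :
    ∑ i, ‖v i‖ ≤ √m * l2norm v := by
  classical
  set s := Finset.univ.filter (fun i => v i ≠ 0)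
  have hsupp : ∑ i ∈ s, ‖v i‖ = ∑ i, ‖v i‖ :=
    Finset.sum_filter_of_ne fun i _ h => norm_ne_zero_iff.mp h
  refine (pow_le_pow_iff_left₀ (by positivity)
    (mul_nonneg (Real.sqrt_nonneg _) (l2norm_nonneg v)) two_ne_zero).mp ?_
  calc (∑ i, ‖v i‖) ^ 2 = (∑ i ∈ s, ‖v i‖) ^ 2 := by rw [hsupp]
    _ ≤ s.card * ∑ i ∈ s, ‖v i‖ ^ 2 := sq_sum_le_card_mul_sum_sq
    _ ≤ m * ∑ i, ‖v i‖ ^ 2 := by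
        gcongr
        · exact_mod_cast hv
        · exact Finset.subset_univ s
    _ = (√m * l2norm v) ^ 2 := by rw [mul_pow, Real.sq_sqrt m.cast_nonneg, l2norm_sq]

lemma abs_sum_re_conjTranspose_mulVec_mul_conj_le {n k t : ℕ} {α : ℝ} (hα : 0 ≤ α)
    {F : Matrix (Fin n) (Fin n) ℂ} (hF : ∀ i j, ‖F i j‖ ≤ α)
    {x e : Fin n → ℂ} (hx : Sparse k x) (he : Sparse t e) :
    |∑ i, ((Fᴴ *ᵥ x) i * conj (e i)).re| ≤ α * √(k * t) * (l2norm x * l2norm e) := by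
  have hFH : ∀ i j, ‖Fᴴ i j‖ ≤ α := fun i j => by simpa using hF j i
  calc |∑ i, ((Fᴴ *ᵥ x) i * conj (e i)).re|
      ≤ (α * ∑ j, ‖x j‖) * ∑ i, ‖e i‖ :=
        abs_sum_re_mul_conj_le (norm_mulVec_apply_le hFH x)
    _ ≤ (α * (√k * l2norm x)) * (√t * l2norm e) := by
        have hx1 := sum_norm_le_sqrt_mul_l2norm hx
        have he1 := sum_norm_le_sqrt_mul_l2norm he
        have hx0 : 0 ≤ √k * l2norm x := mul_nonneg (Real.sqrt_nonneg _) (l2norm_nonneg x)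
        gcongr
    _ = α * √(k * t) * (l2norm x * l2norm e) := by
        rw [Real.sqrt_mul k.cast_nonneg]
        ring

theorem rip_of_unitary_flat_general
    (n k t : ℕ) (α : ℝ) (hα : 0 ≤ α)
    (hαkt : α * Real.sqrt (k * t) ≤ 0.19)
    (F : Matrix (Fin n) (Fin n) ℂ)
    (hFunit : F * F.conjTranspose = 1 ∧ F.conjTranspose * F = 1)
    (hF : ∀ i j, ‖F i j‖ ≤ α)
    (xh : Fin n → ℂ) (hxh : Sparse k xh)
    (e : Fin n → ℂ) (he : Sparse t e) :
    0.9 * Real.sqrt (l2norm xh ^ 2 + l2norm e ^ 2) ≤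
        l2norm (F.conjTranspose.mulVec xh + e) ∧
      l2norm (F.conjTranspose.mulVec xh + e) ≤
        1.1 * Real.sqrt (l2norm xh ^ 2 + l2norm e ^ 2) := by
  set S := l2norm xh ^ 2 + l2norm e ^ 2
  set C := ∑ i, ((Fᴴ *ᵥ xh) i * conj (e i)).re
  have hexpand : l2norm (Fᴴ *ᵥ xh + e) ^ 2 = S + 2 * C := by
    rw [l2norm_sq, sum_norm_sq_add, sum_norm_sq_conjTranspose_mulVec hFunit.1, ← l2norm_sq,
      ← l2norm_sq]
  have hcross : |C| ≤ 0.095 * S := by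
    have hC := abs_sum_re_conjTranspose_mulVec_mul_conj_le hα hF hxh he
    nlinarith [two_mul_le_add_sq (l2norm xh) (l2norm e),
      mul_nonneg (l2norm_nonneg xh) (l2norm_nonneg e)]
  have hS : √S ^ 2 = S := Real.sq_sqrt (by positivity)
  obtain ⟨hlow, hhigh⟩ := abs_le.mp hcross
  have hN := l2norm_nonneg (Fᴴ *ᵥ xh + e)
  constructor
  · refine (pow_le_pow_iff_left₀ (by positivity) hN two_ne_zero).mp ?_
    rw [mul_pow, hS, hexpand]
    linarith
  · refine (pow_le_pow_iff_left₀ hN (by positivity) two_ne_zero).mp ?_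
    rw [mul_pow, hS, hexpand]
    linarith

/-- Restricted isometry property of `[F⁻¹ I]` (Lemma 2 with explicit constants):
if `α√(kt) ≤ 0.19` then `0.9·√(‖x̂‖² + ‖e‖²) ≤ ‖F⁻¹x̂ + e‖ ≤ 1.1·√(‖x̂‖² + ‖e‖²)`
for all `k`-sparse `x̂` and `t`-sparse `e`. Here `F⁻¹ = Fᴴ`. -/
theorem rip_of_unitary_flat
    (n k t : ℕ) (hn : 0 < n) (hk : 0 < k) (ht : 0 < t) (α : ℝ) (hα : 0 ≤ α)
    (hαkt : α * Real.sqrt (k * t) ≤ 0.19)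
    (F : Matrix (Fin n) (Fin n) ℂ)
    (hFunit : F * F.conjTranspose = 1 ∧ F.conjTranspose * F = 1)
    (hF : ∀ i j, ‖F i j‖ ≤ α)
    (xh : Fin n → ℂ) (hxh : Sparse k xh)
    (e : Fin n → ℂ) (he : Sparse t e) :
    0.9 * Real.sqrt (l2norm xh ^ 2 + l2norm e ^ 2) ≤
        l2norm (F.conjTranspose.mulVec xh + e) ∧
      l2norm (F.conjTranspose.mulVec xh + e) ≤
        1.1 * Real.sqrt (l2norm xh ^ 2 + l2norm e ^ 2) :=
  rip_of_unitary_flat_general n k t α hα hαkt F hFunit hF xh hxh e he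
end

section
/- Let n, k, t be positive integers, let α ≥ 0 with 2α·√(k·t) < 1, and let F ∈ ℂ^{n×n} be a unitary matrix all of whose entries satisfy |F_{ij}| ≤ α. Suppose x̂₁, x̂₂ ∈ ℂ^n are k-sparse, e₁, e₂ ∈ ℂ^n are t-sparse, and F^{-1}x̂₁ + e₁ = F^{-1}x̂₂ + e₂. Then x̂₁ = x̂₂ and e₁ = e₂. -/
/-!
Put `x = x̂₁ - x̂₂` (`2k`-sparse) and `e = e₂ - e₁` (`2t`-sparse), so that `Fᴴ x = e` and
`F e = x`. Every entry of `x` is then at most `α ‖e‖₁ ≤ α √(2t) ‖e‖₂`, and `‖e‖₂ = ‖x‖₂` since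
`F` is unitary, while `‖x‖₂ ≤ √(2k) ‖x‖_∞`. Hence `‖x‖_∞ ≤ 2α√(kt) ‖x‖_∞`, which forces
`x = 0` because `2α√(kt) < 1`; then `e = 0` as well.
-/

open Finset Matrix

theorem sum_filter_ne_zero_comp {n : ℕ} (x : Fin n → ℂ) {g : ℂ → ℝ} (hg : g 0 = 0) :
    ∑ i with x i ≠ 0, g (x i) = ∑ i, g (x i) :=
  sum_filter_of_ne fun i _ hi hxi => hi (by rw [hxi, hg])

namespace Sparse

variable {n k l : ℕ} {x y : Fin n → ℂ}

theorem sub (hx : Sparse k x) (hy : Sparse l y) : Sparse (k + l) (x - y) := by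
  have hsupp : univ.filter (fun i => (x - y) i ≠ 0) ⊆
      univ.filter (fun i => x i ≠ 0) ∪ univ.filter (fun i => y i ≠ 0) := by
    intro i
    simp only [mem_filter, mem_union, mem_univ, true_and, Pi.sub_apply]
    contrapose!
    rintro ⟨hxi, hyi⟩
    rw [hxi, hyi, sub_zero]
  exact (card_le_card hsupp).trans ((card_union_le _ _).trans (add_le_add hx hy))

theorem sq_sum_norm_le (hx : Sparse k x) : (∑ i, ‖x i‖) ^ 2 ≤ k * ∑ i, ‖x i‖ ^ 2 := by
  rw [← sum_filter_ne_zero_comp x norm_zero, ← sum_filter_ne_zero_comp x (g := (‖·‖ ^ 2)) (by simp)]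
  exact sq_sum_le_card_mul_sum_sq.trans
    (mul_le_mul_of_nonneg_right (by exact_mod_cast hx) (sum_nonneg fun i _ => by positivity))

theorem sum_norm_sq_le (hx : Sparse k x) : ∑ i, ‖x i‖ ^ 2 ≤ k * ‖x‖ ^ 2 := by
  rw [← sum_filter_ne_zero_comp x (g := (‖·‖ ^ 2)) (by simp)]
  calc ∑ i with x i ≠ 0, ‖x i‖ ^ 2 ≤ ∑ i with x i ≠ 0, ‖x‖ ^ 2 :=
        sum_le_sum fun i _ => pow_le_pow_left₀ (norm_nonneg _) (norm_le_pi_norm x i) 2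
    _ = #(univ.filter fun i => x i ≠ 0) * ‖x‖ ^ 2 := by rw [sum_const, nsmul_eq_mul]
    _ ≤ k * ‖x‖ ^ 2 := mul_le_mul_of_nonneg_right (by exact_mod_cast hx) (by positivity)

end Sparse

theorem Matrix.norm_mulVec_le_of_forall_norm_le {m n R : Type*} [Fintype m] [Fintype n]
    [SeminormedRing R] {A : Matrix m n R} {α : ℝ} (hα : 0 ≤ α) (hA : ∀ i j, ‖A i j‖ ≤ α)
    (v : n → R) : ‖A *ᵥ v‖ ≤ α * ∑ j, ‖v j‖ :=
  (pi_norm_le_iff_of_nonneg (mul_nonneg hα (sum_nonneg fun _ _ => norm_nonneg _))).2 fun i =>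
    calc ‖∑ j, A i j * v j‖ ≤ ∑ j, ‖A i j * v j‖ := norm_sum_le _ _
      _ ≤ ∑ j, α * ‖v j‖ := sum_le_sum fun j _ =>
          (norm_mul_le _ _).trans (mul_le_mul_of_nonneg_right (hA i j) (norm_nonneg _))
      _ = α * ∑ j, ‖v j‖ := (mul_sum _ _ _).symm

theorem Matrix.star_dotProduct_self_eq_sum_norm_sq {n 𝕜 : Type*} [Fintype n] [RCLike 𝕜]
    (v : n → 𝕜) : star v ⬝ᵥ v = ((∑ i, ‖v i‖ ^ 2 : ℝ) : 𝕜) := by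
  simp [dotProduct, RCLike.conj_mul]

theorem Matrix.sum_norm_sq_mulVec_of_conjTranspose_mul_self {m n 𝕜 : Type*} [Fintype m]
    [Fintype n] [DecidableEq n] [RCLike 𝕜] {A : Matrix m n 𝕜} (hA : Aᴴ * A = 1) (v : n → 𝕜) :
    ∑ i, ‖(A *ᵥ v) i‖ ^ 2 = ∑ i, ‖v i‖ ^ 2 := by
  have h : star (A *ᵥ v) ⬝ᵥ (A *ᵥ v) = star v ⬝ᵥ v := by
    rw [star_mulVec, dotProduct_mulVec, vecMul_vecMul, hA, vecMul_one]
  rw [star_dotProduct_self_eq_sum_norm_sq, star_dotProduct_self_eq_sum_norm_sq] at h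
  exact_mod_cast h

theorem sparse_decomposition_unique_general
    (n k t : ℕ) (α : ℝ) (hα : 0 ≤ α)
    (hαkt : 2 * α * Real.sqrt (k * t) < 1)
    (F : Matrix (Fin n) (Fin n) ℂ)
    (hFunit : F * F.conjTranspose = 1 ∧ F.conjTranspose * F = 1)
    (hF : ∀ i j, ‖F i j‖ ≤ α)
    (xh₁ xh₂ : Fin n → ℂ) (hxh₁ : Sparse k xh₁) (hxh₂ : Sparse k xh₂)
    (e₁ e₂ : Fin n → ℂ) (he₁ : Sparse t e₁) (he₂ : Sparse t e₂)
    (heq : F.conjTranspose.mulVec xh₁ + e₁ = F.conjTranspose.mulVec xh₂ + e₂) :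
    xh₁ = xh₂ ∧ e₁ = e₂ := by
  set x := xh₁ - xh₂
  set e := e₂ - e₁
  have hxe : Fᴴ *ᵥ x = e := by
    rw [mulVec_sub, sub_eq_sub_iff_add_eq_add, heq, add_comm]
  have hex : F *ᵥ e = x := by rw [← hxe, mulVec_mulVec, hFunit.1, one_mulVec]
  have hentry : ‖x‖ ^ 2 ≤ α ^ 2 * (∑ j, ‖e j‖) ^ 2 := by
    rw [← mul_pow, ← hex]
    exact pow_le_pow_left₀ (norm_nonneg _) (norm_mulVec_le_of_forall_norm_le hα hF e) 2
  have hl2 : ∑ j, ‖e j‖ ^ 2 = ∑ i, ‖x i‖ ^ 2 := by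
    have hFu : Fᴴᴴ * Fᴴ = 1 := by rw [conjTranspose_conjTranspose, hFunit.1]
    rw [← hxe, sum_norm_sq_mulVec_of_conjTranspose_mul_self hFu]
  have hcs : (∑ j, ‖e j‖) ^ 2 ≤ (t + t : ℕ) * ∑ j, ‖e j‖ ^ 2 := (he₂.sub he₁).sq_sum_norm_le
  have hsup : ∑ i, ‖x i‖ ^ 2 ≤ (k + k : ℕ) * ‖x‖ ^ 2 := (hxh₁.sub hxh₂).sum_norm_sq_le
  have hx : ‖x‖ ^ 2 ≤ (2 * α * Real.sqrt (k * t)) ^ 2 * ‖x‖ ^ 2 := by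
    rw [hl2] at hcs
    push_cast at hcs hsup
    calc ‖x‖ ^ 2 ≤ α ^ 2 * (∑ j, ‖e j‖) ^ 2 := hentry
      _ ≤ α ^ 2 * ((t + t) * ((k + k) * ‖x‖ ^ 2)) := by gcongr; exact hcs.trans (by gcongr)
      _ = _ := by rw [mul_pow, mul_pow, Real.sq_sqrt (by positivity)]; ring
  have hx0 : x = 0 := by
    have hc : (2 * α * Real.sqrt (k * t)) ^ 2 < 1 := pow_lt_one₀ (by positivity) hαkt two_ne_zero
    exact norm_eq_zero.1 (pow_eq_zero_iff two_ne_zero |>.1 (by nlinarith [sq_nonneg ‖x‖]))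
  have hxh : xh₁ = xh₂ := sub_eq_zero.1 hx0
  exact ⟨hxh, add_left_cancel (hxh ▸ heq)⟩

/-- Uniqueness of the sparse-plus-corruption decomposition `y = F⁻¹x̂ + e`
when `2α√(kt) < 1` and `F` is unitary with entries of modulus at most `α`.
Here `F⁻¹ = Fᴴ`. -/
theorem sparse_decomposition_unique
    (n k t : ℕ) (hn : 0 < n) (hk : 0 < k) (ht : 0 < t) (α : ℝ) (hα : 0 ≤ α)
    (hαkt : 2 * α * Real.sqrt (k * t) < 1)
    (F : Matrix (Fin n) (Fin n) ℂ)
    (hFunit : F * F.conjTranspose = 1 ∧ F.conjTranspose * F = 1)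
    (hF : ∀ i j, ‖F i j‖ ≤ α)
    (xh₁ xh₂ : Fin n → ℂ) (hxh₁ : Sparse k xh₁) (hxh₂ : Sparse k xh₂)
    (e₁ e₂ : Fin n → ℂ) (he₁ : Sparse t e₁) (he₂ : Sparse t e₂)
    (heq : F.conjTranspose.mulVec xh₁ + e₁ = F.conjTranspose.mulVec xh₂ + e₂) :
    xh₁ = xh₂ ∧ e₁ = e₂ :=
  sparse_decomposition_unique_general n k t α hα hαkt F hFunit hF xh₁ xh₂ hxh₁ hxh₂ e₁ e₂ he₁ he₂
    heq
end

section
/- Let n, k, t be positive integers and let F ∈ ℂ^{n×n} be a unitary matrix. Assume that for every 3k-sparse vector x̂' ∈ ℂ^n and every 3t-sparse vector e' ∈ ℂ^n, 0.9·√(‖x̂'‖₂² + ‖e'‖₂²) ≤ ‖F^{-1}x̂' + e'‖₂ ≤ 1.1·√(‖x̂'‖₂² + ‖e'‖₂²). Let x̂ ∈ ℂ^n be k-sparse, e ∈ ℂ^n be t-sparse, β ∈ ℂ^n be arbitrary, and y = F^{-1}x̂ + e + β. Let (x̂^{[i]}, e^{[i]})_{i≥1} be an IHT sequence for (y, F,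 k, t). Then for every positive integer T, √(‖x̂^{[T+1]} − x̂‖₂² + ‖e^{[T+1]} − e‖₂²) ≤ 2^{-T}·√(‖x̂‖₂² + ‖e‖₂²) + 4‖β‖₂. -/
/-- `w` is a best `k`-sparse approximation of `u`. -/
def BestSparseApprox {n : ℕ} (k : ℕ) (u w : Fin n → ℂ) : Prop :=
  Sparse k w ∧ ∀ w', Sparse k w' → l2norm (u - w) ≤ l2norm (u - w')

/-- `(xh, eh)` is an IHT sequence for `(y, F, k, t)`: starting from the all-zeros vectors,
each iterate projects onto best `k`-sparse (resp. `t`-sparse) approximations.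
Here `F⁻¹ = Fᴴ` since `F` is unitary. -/
def IHTSeq {n : ℕ} (y : Fin n → ℂ) (F : Matrix (Fin n) (Fin n) ℂ) (k t : ℕ)
    (xh eh : ℕ → Fin n → ℂ) : Prop :=
  xh 1 = 0 ∧ eh 1 = 0 ∧
    ∀ i, 1 ≤ i →
      BestSparseApprox k (F.mulVec (y - eh i)) (xh (i + 1)) ∧
      BestSparseApprox t (y - F.conjTranspose.mulVec (xh i)) (eh (i + 1))

/-!
Write `z = (x̂, e)`, `M = [F⁻¹ I]`, so that `y = M z + β`. Since `F F⁻¹ = 1`, one IHT step is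
`z' = H a` with `a = zᵢ + M*(y - M zᵢ)`, where `H` is the componentwise best sparse approximation.
The three vectors `z`, `zᵢ`, `z'` lie in a single coordinate subspace `K` of sparsity `(3k, 3t)`,
on which `M` is a restricted isometry with constant `δ = 0.1`. Optimality of `z'` survives the
orthogonal projection `P` onto `K`, giving `‖z - z'‖ ≤ 2 ‖P (a - z)‖`, and
`a - z = (M*M - 1)(z - zᵢ) + M*β`. By polarization the RIP bounds `P (M*M - 1)` on `K` by
`2δ + δ² = 0.21`, and `P M*` by `1 + δ`. So the error contracts by `0.42 < 1/2` at each step, up to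
`2.2 ‖β‖`, and the geometric series contributes at most `2.2 / 0.58 < 4` times `‖β‖`.
-/

open scoped InnerProductSpace

section RestrictedIsometry

variable {𝕜 E G : Type*} [RCLike 𝕜] [NormedAddCommGroup E] [InnerProductSpace 𝕜 E]
  [NormedAddCommGroup G] [InnerProductSpace 𝕜 G]

def RestrictedIsometryOn (Φ : E →L[𝕜] G) (K : Submodule 𝕜 E) (δ : ℝ) : Prop :=
  ∀ v ∈ K, (1 - δ) * ‖v‖ ≤ ‖Φ v‖ ∧ ‖Φ v‖ ≤ (1 + δ) * ‖v‖

namespace RestrictedIsometryOn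

variable {Φ : E →L[𝕜] G} {K : Submodule 𝕜 E} {δ : ℝ}

theorem re_inner_map_map_sub_le (hΦ : RestrictedIsometryOn Φ K δ) (hδ : δ ≤ 1) {p q : E}
    (hp : p ∈ K) (hq : q ∈ K) :
    RCLike.re ⟪Φ p, Φ q⟫_𝕜 - RCLike.re ⟪p, q⟫_𝕜 ≤
      δ * (‖p‖ ^ 2 + ‖q‖ ^ 2) + δ ^ 2 * (‖p‖ * ‖q‖) := by
  have hadd : ‖Φ (p + q)‖ ^ 2 ≤ ((1 + δ) * ‖p + q‖) ^ 2 :=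
    pow_le_pow_left₀ (norm_nonneg _) (hΦ _ (K.add_mem hp hq)).2 2
  have hsub : ((1 - δ) * ‖p - q‖) ^ 2 ≤ ‖Φ (p - q)‖ ^ 2 :=
    pow_le_pow_left₀ (by nlinarith [norm_nonneg (p - q)]) (hΦ _ (K.sub_mem hp hq)).1 2
  rw [map_add, mul_pow, norm_add_sq (𝕜 := 𝕜) (Φ p), norm_add_sq (𝕜 := 𝕜) p] at hadd
  rw [map_sub, mul_pow, norm_sub_sq (𝕜 := 𝕜) (Φ p), norm_sub_sq (𝕜 := 𝕜) p] at hsub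
  have hcs : δ ^ 2 * RCLike.re ⟪p, q⟫_𝕜 ≤ δ ^ 2 * (‖p‖ * ‖q‖) :=
    mul_le_mul_of_nonneg_left (re_inner_le_norm p q) (sq_nonneg δ)
  linear_combination (hadd + hsub) / 4 + hcs

theorem re_inner_map_map_sub_le_mul (hΦ : RestrictedIsometryOn Φ K δ) (hδ : δ ≤ 1) {p q : E}
    (hp : p ∈ K) (hq : q ∈ K) :
    RCLike.re ⟪Φ p, Φ q⟫_𝕜 - RCLike.re ⟪p, q⟫_𝕜 ≤ (2 * δ + δ ^ 2) * (‖p‖ * ‖q‖) := by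
  rcases eq_or_ne p 0 with rfl | hp0
  · simp
  rcases eq_or_ne q 0 with rfl | hq0
  · simp
  have hpn := norm_pos_iff.mpr hp0
  have hqn := norm_pos_iff.mpr hq0
  -- `p ↦ c • p`, `q ↦ c⁻¹ • q` leaves both inner products unchanged and equalizes the norms
  set c : ℝ := √(‖q‖ / ‖p‖)
  have hc : 0 < c := Real.sqrt_pos.mpr (div_pos hqn hpn)
  have hc2 : c ^ 2 = ‖q‖ / ‖p‖ := Real.sq_sqrt (div_pos hqn hpn).le
  have hc' : (c : 𝕜) ≠ 0 := RCLike.ofReal_ne_zero.mpr hc.ne'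
  have h := hΦ.re_inner_map_map_sub_le hδ (K.smul_mem (c : 𝕜) hp) (K.smul_mem (c⁻¹ : 𝕜) hq)
  simp only [map_smul, inner_smul_left, inner_smul_right, RCLike.conj_ofReal, ← mul_assoc,
    inv_mul_cancel₀ hc', one_mul, norm_smul, norm_inv, RCLike.norm_ofReal, abs_of_pos hc] at h
  have hbal : (c * ‖p‖) ^ 2 + (c⁻¹ * ‖q‖) ^ 2 = 2 * (‖p‖ * ‖q‖) := by
    rw [mul_pow, mul_pow, inv_pow, hc2]
    field_simp
    ring
  have hprod : δ ^ 2 * c * ‖p‖ * c⁻¹ * ‖q‖ = δ ^ 2 * (‖p‖ * ‖q‖) := by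
    field_simp
  rw [hbal, hprod] at h
  linarith

end RestrictedIsometryOn

section Projection

variable {K : Submodule 𝕜 E} [K.HasOrthogonalProjection]

theorem norm_starProjection_le_of_re_inner_le {w : E} {C : ℝ} (hC : 0 ≤ C)
    (h : ∀ q ∈ K, RCLike.re ⟪q, w⟫_𝕜 ≤ C * ‖q‖) : ‖K.starProjection w‖ ≤ C := by
  have hsq : ‖K.starProjection w‖ ^ 2 ≤ C * ‖K.starProjection w‖ := by
    have := h _ (K.starProjection_apply_mem w)
    rwa [K.re_inner_starProjection_eq_normSq] at this
  nlinarith [norm_nonneg (K.starProjection w)]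

theorem norm_starProjection_sub_le_of_norm_sub_le {a z z' : E} (hz : z ∈ K) (hz' : z' ∈ K)
    (h : ‖a - z'‖ ≤ ‖a - z‖) : ‖K.starProjection (a - z')‖ ≤ ‖K.starProjection (a - z)‖ := by
  have hpyth {v : E} (hv : v ∈ K) :
      ‖a - v‖ ^ 2 = ‖K.starProjection (a - v)‖ ^ 2 + ‖Kᗮ.starProjection a‖ ^ 2 := by
    rw [K.norm_sq_eq_add_norm_sq_starProjection, map_sub Kᗮ.starProjection,
      Submodule.starProjection_orthogonal_apply_eq_zero hv, sub_zero]
  have hsq := pow_le_pow_left₀ (norm_nonneg _) h 2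
  rw [hpyth hz, hpyth hz'] at hsq
  exact (pow_le_pow_iff_left₀ (norm_nonneg _) (norm_nonneg _) two_ne_zero).mp (by linarith)

end Projection

section Adjoint

variable [CompleteSpace E] [CompleteSpace G] {Φ : E →L[𝕜] G} {K : Submodule 𝕜 E}
  [K.HasOrthogonalProjection] {δ : ℝ}

theorem norm_starProjection_adjoint_le {C : ℝ} (hC : 0 ≤ C) (h : ∀ v ∈ K, ‖Φ v‖ ≤ C * ‖v‖)
    (b : G) : ‖K.starProjection (Φ.adjoint b)‖ ≤ C * ‖b‖ :=
  norm_starProjection_le_of_re_inner_le (by positivity) fun q hq => by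
    rw [ContinuousLinearMap.adjoint_inner_right]
    calc RCLike.re ⟪Φ q, b⟫_𝕜 ≤ ‖Φ q‖ * ‖b‖ := re_inner_le_norm _ _
      _ ≤ C * ‖q‖ * ‖b‖ := by gcongr; exact h q hq
      _ = C * ‖b‖ * ‖q‖ := by ring

namespace RestrictedIsometryOn

theorem norm_starProjection_adjoint_map_sub_le (hΦ : RestrictedIsometryOn Φ K δ) (hδ₀ : 0 ≤ δ)
    (hδ₁ : δ ≤ 1) {r : E} (hr : r ∈ K) :
    ‖K.starProjection (Φ.adjoint (Φ r) - r)‖ ≤ (2 * δ + δ ^ 2) * ‖r‖ :=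
  norm_starProjection_le_of_re_inner_le (by positivity) fun q hq => by
    rw [inner_sub_right, ContinuousLinearMap.adjoint_inner_right, map_sub]
    calc RCLike.re ⟪Φ q, Φ r⟫_𝕜 - RCLike.re ⟪q, r⟫_𝕜 ≤ (2 * δ + δ ^ 2) * (‖q‖ * ‖r‖) :=
          hΦ.re_inner_map_map_sub_le_mul hδ₁ hq hr
      _ = (2 * δ + δ ^ 2) * ‖r‖ * ‖q‖ := by ring

theorem norm_sub_le_of_iht_step (hΦ : RestrictedIsometryOn Φ K δ) (hδ₀ : 0 ≤ δ) (hδ₁ : δ ≤ 1)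
    {z z₀ z₁ : E} (hz : z ∈ K) (hz₀ : z₀ ∈ K) (hz₁ : z₁ ∈ K) {y β : G} (hy : y = Φ z + β)
    (h : ‖z₀ + Φ.adjoint (y - Φ z₀) - z₁‖ ≤ ‖z₀ + Φ.adjoint (y - Φ z₀) - z‖) :
    ‖z - z₁‖ ≤ 2 * (2 * δ + δ ^ 2) * ‖z - z₀‖ + 2 * (1 + δ) * ‖β‖ := by
  set a := z₀ + Φ.adjoint (y - Φ z₀)
  have ha : a - z = (Φ.adjoint (Φ (z - z₀)) - (z - z₀)) + Φ.adjoint β := by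
    simp only [a, hy, map_sub, map_add]
    abel
  have hz₁' : z - z₁ = K.starProjection (a - z₁) - K.starProjection (a - z) := by
    rw [← map_sub, sub_sub_sub_cancel_left, K.starProjection_eq_self_iff.mpr (K.sub_mem hz hz₁)]
  calc ‖z - z₁‖ ≤ ‖K.starProjection (a - z₁)‖ + ‖K.starProjection (a - z)‖ :=
        hz₁' ▸ norm_sub_le _ _
    _ ≤ 2 * ‖K.starProjection (a - z)‖ := by
        linarith [norm_starProjection_sub_le_of_norm_sub_le hz hz₁ h]
    _ ≤ 2 * (‖K.starProjection (Φ.adjoint (Φ (z - z₀)) - (z - z₀))‖ +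
          ‖K.starProjection (Φ.adjoint β)‖) := by
        rw [ha, map_add]
        gcongr
        exact norm_add_le _ _
    _ ≤ 2 * ((2 * δ + δ ^ 2) * ‖z - z₀‖ + (1 + δ) * ‖β‖) := by
        gcongr 2 * (?_ + ?_)
        · exact hΦ.norm_starProjection_adjoint_map_sub_le hδ₀ hδ₁ (K.sub_mem hz hz₀)
        · exact norm_starProjection_adjoint_le (by linarith) (fun v hv => (hΦ v hv).2) β
    _ = 2 * (2 * δ + δ ^ 2) * ‖z - z₀‖ + 2 * (1 + δ) * ‖β‖ := by ring

end RestrictedIsometryOn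

end Adjoint

end RestrictedIsometry

theorem le_pow_mul_add_div_of_le_mul_add {u : ℕ → ℝ} {c d : ℝ} (hc₀ : 0 ≤ c) (hc₁ : c < 1)
    (hd : 0 ≤ d) (h : ∀ m, u (m + 1) ≤ c * u m + d) (m : ℕ) :
    u m ≤ c ^ m * u 0 + d / (1 - c) := by
  induction m with
  | zero =>
    have : 0 ≤ d / (1 - c) := div_nonneg hd (by linarith)
    simpa
  | succ m ih =>
    have h1c : 1 - c ≠ 0 := by linarith
    calc u (m + 1) ≤ c * (c ^ m * u 0 + d / (1 - c)) + d :=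
          (h m).trans (by gcongr)
      _ = c ^ (m + 1) * u 0 + d / (1 - c) := by field_simp; ring

def supportedOn {𝕜 ι : Type*} [RCLike 𝕜] (S : Set ι) : Submodule 𝕜 (EuclideanSpace 𝕜 ι) where
  carrier := {v | ∀ i ∉ S, v i = 0}
  add_mem' hv hw i hi := by simp [hv i hi, hw i hi]
  zero_mem' _ _ := rfl
  smul_mem' c v hv i hi := by simp [hv i hi]

section Sparse

variable {n k : ℕ}

theorem sparse_of_forall_notMem {x : Fin n → ℂ} {S : Finset (Fin n)} (hS : S.card ≤ k)
    (h : ∀ i ∉ S, x i = 0) : Sparse k x :=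
  (Finset.card_le_card fun i hi => by
    by_contra hiS
    exact (Finset.mem_filter.mp hi).2 (h i hiS)).trans hS

theorem Sparse.exists_common_support {x₁ x₂ x₃ : Fin n → ℂ} (h₁ : Sparse k x₁)
    (h₂ : Sparse k x₂) (h₃ : Sparse k x₃) :
    ∃ S : Finset (Fin n), S.card ≤ 3 * k ∧ ∀ i ∉ S, x₁ i = 0 ∧ x₂ i = 0 ∧ x₃ i = 0 := by
  refine ⟨Finset.univ.filter (x₁ · ≠ 0) ∪ Finset.univ.filter (x₂ · ≠ 0) ∪
    Finset.univ.filter (x₃ · ≠ 0), ?_, fun i hi => by simpa [not_or] using hi⟩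
  calc _ ≤ _ := Finset.card_union_le _ _
    _ ≤ _ := Nat.add_le_add_right (Finset.card_union_le _ _) _
    _ ≤ k + k + k := Nat.add_le_add (Nat.add_le_add h₁ h₂) h₃
    _ = 3 * k := by ring

theorem IHTSeq.sparse_succ {t : ℕ} {y : Fin n → ℂ} {F : Matrix (Fin n) (Fin n) ℂ}
    {xs es : ℕ → Fin n → ℂ} (h : IHTSeq y F k t xs es) (m : ℕ) :
    Sparse k (xs (m + 1)) ∧ Sparse t (es (m + 1)) := by
  obtain ⟨hx, he, hstep⟩ := h
  cases m with
  | zero => simp [Sparse, hx, he]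
  | succ m => exact ⟨(hstep (m + 1) le_add_self).1.1, (hstep (m + 1) le_add_self).2.1⟩

end Sparse

section Augmented

open WithLp
open scoped Matrix

variable {n : ℕ}

def joint (x e : Fin n → ℂ) : EuclideanSpace ℂ (Fin n ⊕ Fin n) := toLp 2 (Sum.elim x e)

theorem norm_toLp_eq_l2norm (x : Fin n → ℂ) : ‖toLp 2 x‖ = l2norm x := by
  rw [EuclideanSpace.norm_eq]
  rfl

theorem norm_joint (x e : Fin n → ℂ) : ‖joint x e‖ = √(l2norm x ^ 2 + l2norm e ^ 2) := by
  rw [EuclideanSpace.norm_eq, l2norm, l2norm, Real.sq_sqrt (by positivity),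
    Real.sq_sqrt (by positivity), Fintype.sum_sum_type]
  rfl

theorem joint_add (x e x' e' : Fin n → ℂ) : joint (x + x') (e + e') = joint x e + joint x' e' := by
  rw [joint, Sum.elim_add_add, toLp_add]
  rfl

theorem joint_sub (x e x' e' : Fin n → ℂ) : joint (x - x') (e - e') = joint x e - joint x' e' := by
  rw [joint, Sum.elim_sub_sub, toLp_sub]
  rfl

theorem norm_joint_le {x e x' e' : Fin n → ℂ} (hx : l2norm x ≤ l2norm x')
    (he : l2norm e ≤ l2norm e') : ‖joint x e‖ ≤ ‖joint x' e'‖ := by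
  rw [norm_joint, norm_joint]
  gcongr <;> exact Real.sqrt_nonneg _

theorem joint_mem_supportedOn {x e : Fin n → ℂ} {Sx Se : Finset (Fin n)}
    (hx : ∀ i ∉ Sx, x i = 0) (he : ∀ i ∉ Se, e i = 0) :
    joint x e ∈ supportedOn (𝕜 := ℂ) ↑(Sx.disjSum Se) := by
  rintro (i | i) hi
  · exact hx i (by simpa using hi)
  · exact he i (by simpa using hi)

noncomputable def augmentedMap (F : Matrix (Fin n) (Fin n) ℂ) :
    EuclideanSpace ℂ (Fin n ⊕ Fin n) →L[ℂ] EuclideanSpace ℂ (Fin n) :=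
  (Matrix.fromCols Fᴴ 1).toEuclideanLin.toContinuousLinearMap

variable {F : Matrix (Fin n) (Fin n) ℂ}

theorem augmentedMap_joint (x e : Fin n → ℂ) :
    augmentedMap F (joint x e) = toLp 2 (Fᴴ *ᵥ x + e) := by
  simp [augmentedMap, joint]

theorem adjoint_augmentedMap_toLp (w : Fin n → ℂ) :
    (augmentedMap F).adjoint (toLp 2 w) = joint (F *ᵥ w) w := by
  rw [augmentedMap, ← LinearMap.adjoint_toContinuousLinearMap,
    ← Matrix.toEuclideanLin_conjTranspose_eq_adjoint,
    Matrix.conjTranspose_fromCols_eq_fromRows_conjTranspose]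
  simp [joint]

theorem joint_iht_update (hF : F * Fᴴ = 1) (x e y : Fin n → ℂ) :
    joint (F *ᵥ (y - e)) (y - Fᴴ *ᵥ x) =
      joint x e + (augmentedMap F).adjoint (toLp 2 y - augmentedMap F (joint x e)) := by
  rw [augmentedMap_joint, ← toLp_sub, adjoint_augmentedMap_toLp, ← joint_add]
  congr 1
  · simp only [Matrix.mulVec_sub, Matrix.mulVec_add, Matrix.mulVec_mulVec, hF,
      Matrix.one_mulVec]
    abel
  · abel

theorem restrictedIsometryOn_augmentedMap {k t : ℕ}
    (hRIP : ∀ (xh' e' : Fin n → ℂ), Sparse (3 * k) xh' → Sparse (3 * t) e' →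
      0.9 * √(l2norm xh' ^ 2 + l2norm e' ^ 2) ≤ l2norm (Fᴴ *ᵥ xh' + e') ∧
        l2norm (Fᴴ *ᵥ xh' + e') ≤ 1.1 * √(l2norm xh' ^ 2 + l2norm e' ^ 2))
    {Sx Se : Finset (Fin n)} (hSx : Sx.card ≤ 3 * k) (hSe : Se.card ≤ 3 * t) :
    RestrictedIsometryOn (augmentedMap F) (supportedOn ↑(Sx.disjSum Se)) 0.1 := by
  intro v hv
  have hv' : v = joint (fun i => v (.inl i)) (fun i => v (.inr i)) := by
    ext (i | i) <;> rfl
  have hx : Sparse (3 * k) (fun i => v (.inl i)) :=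
    sparse_of_forall_notMem hSx fun i hi => hv (.inl i) (by simpa using hi)
  have he : Sparse (3 * t) (fun i => v (.inr i)) :=
    sparse_of_forall_notMem hSe fun i hi => hv (.inr i) (by simpa using hi)
  rw [hv', augmentedMap_joint, norm_toLp_eq_l2norm, norm_joint]
  have := hRIP _ _ hx he
  norm_num at this ⊢
  exact this

theorem norm_joint_sub_iht_step_le {k t : ℕ} (hF : F * Fᴴ = 1)
    (hRIP : ∀ Sx Se : Finset (Fin n), Sx.card ≤ 3 * k → Se.card ≤ 3 * t →
      RestrictedIsometryOn (augmentedMap F) (supportedOn ↑(Sx.disjSum Se)) 0.1)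
    {xh e β y x₀ e₀ x₁ e₁ : Fin n → ℂ} (hxh : Sparse k xh) (he : Sparse t e)
    (hy : y = Fᴴ *ᵥ xh + e + β) (hx₀ : Sparse k x₀) (he₀ : Sparse t e₀)
    (hx₁ : BestSparseApprox k (F *ᵥ (y - e₀)) x₁) (he₁ : BestSparseApprox t (y - Fᴴ *ᵥ x₀) e₁) :
    ‖joint xh e - joint x₁ e₁‖ ≤ 0.42 * ‖joint xh e - joint x₀ e₀‖ + 2.2 * l2norm β := by
  obtain ⟨Sx, hSx, hx⟩ := hxh.exists_common_support hx₀ hx₁.1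
  obtain ⟨Se, hSe, he'⟩ := he.exists_common_support he₀ he₁.1
  have hy' : toLp 2 y = augmentedMap F (joint xh e) + toLp 2 β := by
    rw [augmentedMap_joint, hy, toLp_add]
  have hcloser := norm_joint_le (hx₁.2 xh hxh) (he₁.2 e he)
  rw [joint_sub, joint_sub, joint_iht_update hF] at hcloser
  have := (hRIP Sx Se hSx hSe).norm_sub_le_of_iht_step (by norm_num) (by norm_num)
    (joint_mem_supportedOn (fun i hi => (hx i hi).1) (fun i hi => (he' i hi).1))
    (joint_mem_supportedOn (fun i hi => (hx i hi).2.1) (fun i hi => (he' i hi).2.1))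
    (joint_mem_supportedOn (fun i hi => (hx i hi).2.2) (fun i hi => (he' i hi).2.2)) hy' hcloser
  rw [norm_toLp_eq_l2norm] at this
  norm_num at this ⊢
  exact this

end Augmented

theorem iht_convergence_general
    (n k t : ℕ)
    (F : Matrix (Fin n) (Fin n) ℂ)
    (hFunit : F * F.conjTranspose = 1 ∧ F.conjTranspose * F = 1)
    (hRIP : ∀ (xh' e' : Fin n → ℂ), Sparse (3 * k) xh' → Sparse (3 * t) e' →
      0.9 * Real.sqrt (l2norm xh' ^ 2 + l2norm e' ^ 2) ≤
          l2norm (F.conjTranspose.mulVec xh' + e') ∧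
        l2norm (F.conjTranspose.mulVec xh' + e') ≤
          1.1 * Real.sqrt (l2norm xh' ^ 2 + l2norm e' ^ 2))
    (xh : Fin n → ℂ) (hxh : Sparse k xh)
    (e : Fin n → ℂ) (he : Sparse t e)
    (β : Fin n → ℂ)
    (y : Fin n → ℂ) (hy : y = F.conjTranspose.mulVec xh + e + β)
    (xhSeq ehSeq : ℕ → Fin n → ℂ) (hIHT : IHTSeq y F k t xhSeq ehSeq) :
    ∀ T : ℕ, 1 ≤ T →
      Real.sqrt (l2norm (xhSeq (T + 1) - xh) ^ 2 + l2norm (ehSeq (T + 1) - e) ^ 2) ≤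
        (2 : ℝ) ^ (-(T : ℤ)) * Real.sqrt (l2norm xh ^ 2 + l2norm e ^ 2) +
          4 * l2norm β := by
  intro T _
  set u : ℕ → ℝ := fun m => ‖joint xh e - joint (xhSeq (m + 1)) (ehSeq (m + 1))‖
  have hstep (m : ℕ) : u (m + 1) ≤ 0.42 * u m + 2.2 * l2norm β :=
    norm_joint_sub_iht_step_le hFunit.1 (fun _ _ => restrictedIsometryOn_augmentedMap hRIP) hxh
      he hy (hIHT.sparse_succ m).1 (hIHT.sparse_succ m).2 (hIHT.2.2 (m + 1) le_add_self).1
      (hIHT.2.2 (m + 1) le_add_self).2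
  have hβ : 0 ≤ l2norm β := Real.sqrt_nonneg _
  have hu₀ : u 0 = √(l2norm xh ^ 2 + l2norm e ^ 2) := by
    simp only [u, zero_add, hIHT.1, hIHT.2.1, ← joint_sub, sub_zero, norm_joint]
  have hpow : (0.42 : ℝ) ^ T ≤ 2 ^ (-(T : ℤ)) := by
    rw [zpow_neg, zpow_natCast, ← inv_pow]
    exact pow_le_pow_left₀ (by norm_num) (by norm_num) T
  rw [← norm_joint, joint_sub, norm_sub_rev]
  calc u T ≤ 0.42 ^ T * u 0 + 2.2 * l2norm β / (1 - 0.42) :=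
        le_pow_mul_add_div_of_le_mul_add (by norm_num) (by norm_num) (by positivity) hstep T
    _ ≤ 2 ^ (-(T : ℤ)) * √(l2norm xh ^ 2 + l2norm e ^ 2) + 4 * l2norm β := by
        rw [hu₀]
        gcongr
        rw [div_le_iff₀ (by norm_num)]
        linarith

/-- Model-based IHT convergence (Theorem 2): under the `((3k,3t),0.1)`-RIP of `[F⁻¹ I]`,
the IHT iterates converge geometrically to `(x̂, e)` up to `4‖β‖`. -/
theorem iht_convergence
    (n k t : ℕ) (hn : 0 < n) (hk : 0 < k) (ht : 0 < t)
    (F : Matrix (Fin n) (Fin n) ℂ)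
    (hFunit : F * F.conjTranspose = 1 ∧ F.conjTranspose * F = 1)
    (hRIP : ∀ (xh' e' : Fin n → ℂ), Sparse (3 * k) xh' → Sparse (3 * t) e' →
      0.9 * Real.sqrt (l2norm xh' ^ 2 + l2norm e' ^ 2) ≤
          l2norm (F.conjTranspose.mulVec xh' + e') ∧
        l2norm (F.conjTranspose.mulVec xh' + e') ≤
          1.1 * Real.sqrt (l2norm xh' ^ 2 + l2norm e' ^ 2))
    (xh : Fin n → ℂ) (hxh : Sparse k xh)
    (e : Fin n → ℂ) (he : Sparse t e)
    (β : Fin n → ℂ)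
    (y : Fin n → ℂ) (hy : y = F.conjTranspose.mulVec xh + e + β)
    (xhSeq ehSeq : ℕ → Fin n → ℂ) (hIHT : IHTSeq y F k t xhSeq ehSeq) :
    ∀ T : ℕ, 1 ≤ T →
      Real.sqrt (l2norm (xhSeq (T + 1) - xh) ^ 2 + l2norm (ehSeq (T + 1) - e) ^ 2) ≤
        (2 : ℝ) ^ (-(T : ℤ)) * Real.sqrt (l2norm xh ^ 2 + l2norm e ^ 2) +
          4 * l2norm β :=
  iht_convergence_general n k t F hFunit hRIP xh hxh e he β y hy xhSeq ehSeq hIHT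
end
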